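/- arXiv:2511.13937 — 4 statements merged into one kernel-verified Lean document; each statement's English description precedes it below -/
import Mathlib

section
/- If the product of the (unit-modulus) edge weights along every cycle of a connected Hermitian unit-weighted graph equals 1, then there exists a function s : V → ℂ with |s(v)| = 1 for all v such that W_uv = s(u) · conj(s(v)) for every edge (u,v). Consequently, the graph is switching-equivalent to a graph with all edge weights equal to 1. -/
/-!
Fix a base vertex `v₀` and let `f v` be the weight product along a walk from `v₀` to `v`.
For an edge `uv`, going out to `u`, across the edge and back from `v` is a closed walk, and
reversing a walk conjugates its product, so `f u * W u v * conj (f v) = 1`. Since every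
product is unimodular, `s := conj ∘ f` is the switching function.
-/

namespace SimpleGraph

variable {V M : Type*} {G : SimpleGraph V} [Monoid M] (W : V → V → M)

namespace Walk

def weightProd {u v : V} (p : G.Walk u v) : M :=
  (p.darts.map fun d => W d.fst d.snd).prod

@[simp]
lemma weightProd_nil {u : V} : (nil : G.Walk u u).weightProd W = 1 := rfl

@[simp]
lemma weightProd_cons {u v w : V} (h : G.Adj u v) (p : G.Walk v w) :
    (cons h p).weightProd W = W u v * p.weightProd W := rfl

@[simp]
lemma weightProd_append {u v w : V} (p : G.Walk u v) (q : G.Walk v w) :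
    (p.append q).weightProd W = p.weightProd W * q.weightProd W := by
  simp [weightProd, darts_append]

lemma weightProd_concat {u v w : V} (p : G.Walk u v) (h : G.Adj v w) :
    (p.concat h).weightProd W = p.weightProd W * W v w := by
  simp [concat_eq_append]

lemma weightProd_reverse [StarMul M] (hW : ∀ u v, W v u = star (W u v)) {u v : V}
    (p : G.Walk u v) : p.reverse.weightProd W = star (p.weightProd W) := by
  induction p with
  | nil => simp
  | @cons a b _ h p ih => simp [reverse_cons, ih, hW a b, star_mul]

lemma weightProd_mem {S : Submonoid M} (hW : ∀ u v, G.Adj u v → W u v ∈ S) {u v : V}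
    (p : G.Walk u v) : p.weightProd W ∈ S := by
  induction p with
  | nil => exact S.one_mem
  | cons h p ih => exact S.mul_mem (hW _ _ h) ih

end Walk

theorem Connected.exists_switching_of_weightProd_eq_one [StarMul M] (hconn : G.Connected)
    (hunit : ∀ u v, G.Adj u v → W u v ∈ unitary M) (hherm : ∀ u v, W v u = star (W u v))
    (hbal : ∀ (u : V) (p : G.Walk u u), p.weightProd W = 1) :
    ∃ s : V → M, (∀ v, s v ∈ unitary M) ∧ ∀ u v, G.Adj u v → W u v = s u * star (s v) := by
  obtain ⟨v₀⟩ := hconn.nonempty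
  let f : V → M := fun v => (hconn v₀ v).some.weightProd W
  have hf : ∀ v, f v ∈ unitary M := fun v => Walk.weightProd_mem W hunit _
  have hcycle : ∀ u v (h : G.Adj u v), f u * W u v * star (f v) = 1 := fun u v h => by
    simpa [Walk.weightProd_concat, Walk.weightProd_reverse W hherm] using
      hbal v₀ (((hconn v₀ u).some.concat h).append (hconn v₀ v).some.reverse)
  refine ⟨fun v => star (f v), fun v => Unitary.star_mem (hf v), fun u v h => ?_⟩
  calc W u v = star (f u) * f u * W u v * (star (f v) * f v) := by
        simp [Unitary.star_mul_self_of_mem (hf u), Unitary.star_mul_self_of_mem (hf v)]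
    _ = star (f u) * (f u * W u v * star (f v)) * f v := by simp only [mul_assoc]
    _ = star (f u) * star (star (f v)) := by rw [hcycle u v h, mul_one, star_star]

end SimpleGraph

lemma Complex.mem_unitary_of_norm_eq_one {z : ℂ} (hz : ‖z‖ = 1) : z ∈ unitary ℂ :=
  Unitary.mem_iff_star_mul_self.2 (by simpa [hz] using Complex.conj_mul' z)

/-- If every cycle (closed walk) of a connected graph with Hermitian unit-modulus complex
weights has weight product `1`, then there is a unit-modulus `s : V → ℂ` with
`W u v = s u · conj (s v)` on edges; consequently the graph is switching-equivalent to the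
all-ones weighting. -/
theorem stmt2 {V : Type*} (G : SimpleGraph V) (hconn : G.Connected)
    (W : V → V → ℂ)
    (hunit : ∀ u v, G.Adj u v → ‖W u v‖ = 1)
    (hherm : ∀ u v, W v u = starRingEnd ℂ (W u v))
    (hbal : ∀ (u : V) (p : G.Walk u u),
      (p.darts.map (fun d => W d.fst d.snd)).prod = 1) :
    ∃ s : V → ℂ, (∀ v, ‖s v‖ = 1) ∧
      (∀ u v, G.Adj u v → W u v = s u * starRingEnd ℂ (s v)) ∧
      (∀ u v, G.Adj u v → starRingEnd ℂ (s u) * W u v * s v = 1) := by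
  obtain ⟨s, hs, hsw⟩ := hconn.exists_switching_of_weightProd_eq_one W
    (fun u v h => Complex.mem_unitary_of_norm_eq_one (hunit u v h)) hherm hbal
  refine ⟨s, fun v => CStarRing.norm_of_mem_unitary (hs v), hsw, fun u v h => ?_⟩
  rw [hsw u v h, starRingEnd_apply, ← mul_assoc,
    Unitary.star_mul_self_of_mem (hs u), one_mul, Unitary.star_mul_self_of_mem (hs v)]
end

section
/- Let G be a structurally balanced, connected, non-bipartite Hermitian complex-weighted graph with associated unit-phase function s : V → ℂ (so W_uv = s(u) conj(s(v)) |W_uv|). Then for any initial state x(0) ∈ ℂ^n, the complex random walk x(t+1) = P x(t) converges to the steady state x̂ with x̂_j = s(j) · (Σ_k conj(s(k)) q_k x_k(0)) / (2m), where q_k = Σ_l |W_kl| and 2m = Σ_k q_k. In particular, up to a global complex constant, the limit of x_j is s(j) q_j / (2m) scaled by a constant independent of j. -/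
/-!
Conjugating by `S = diag s` turns `P` into the random walk `P₀ = Q⁻¹|W|` of the nonnegative
weights `|W|`, and `P₀` is similar to the Hermitian matrix `Q^{-1/2}|W|Q^{-1/2}`, so the powers
of `P₀` converge as soon as its eigenvalues lie in `(-1, 1]`. That follows from a maximum
principle: an eigenvector with eigenvalue `μ = ±1` satisfies `u b = μ ^ ℓ • u a` along every
walk of length `ℓ` starting at a vertex `a` of maximal modulus, which is absurd for `μ = -1` on
the odd closed walk of a non-bipartite graph and makes fixed vectors constant on a connected
one. Hence the limit of `P₀ ^ t y` is a constant vector, and the stationarity `qᵀ P₀ = qᵀ`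
identifies the constant as `∑ q k * y k / ∑ q k`.
-/

open Filter Finset Matrix Topology

theorem eq_of_sum_smul_eq_of_norm_le {E ι : Type*} [NormedAddCommGroup E] [InnerProductSpace ℝ E]
    {s : Finset ι} {a : ι → ℝ} {z : ι → E} {w : E} (ha : ∀ j ∈ s, 0 ≤ a j)
    (hz : ∀ j ∈ s, ‖z j‖ ≤ ‖w‖) (h : ∑ j ∈ s, a j • z j = (∑ j ∈ s, a j) • w)
    {j : ι} (hj : j ∈ s) (haj : a j ≠ 0) : z j = w := by
  have hinner : ∀ k ∈ s, a k * inner ℝ w (z k) ≤ a k * ‖w‖ ^ 2 := fun k hk =>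
    mul_le_mul_of_nonneg_left
      ((real_inner_le_norm _ _).trans (by nlinarith [hz k hk, norm_nonneg w])) (ha k hk)
  have hsum : ∑ k ∈ s, a k * inner ℝ w (z k) = ∑ k ∈ s, a k * ‖w‖ ^ 2 := by
    simpa [inner_sum, inner_smul_right, real_inner_self_eq_norm_sq, Finset.sum_mul]
      using congrArg (inner ℝ w) h
  have hwj : inner ℝ w (z j) = ‖w‖ ^ 2 :=
    mul_left_cancel₀ haj ((Finset.sum_eq_sum_iff_of_le hinner).mp hsum j hj)
  have : ‖z j - w‖ ^ 2 ≤ 0 := by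
    rw [norm_sub_sq_real, real_inner_comm, hwj]
    nlinarith [hz j hj, norm_nonneg (z j)]
  exact sub_eq_zero.mp (norm_eq_zero.mp (by nlinarith [norm_nonneg (z j - w)]))

theorem exists_tendsto_pow_of_mem_Ioc {μ : ℝ} (h : μ ∈ Set.Ioc (-1) 1) :
    ∃ l, Tendsto (fun t : ℕ => μ ^ t) atTop (𝓝 l) := by
  rcases h.2.eq_or_lt with rfl | hlt
  · exact ⟨1, by simp⟩
  · exact ⟨0, tendsto_pow_atTop_nhds_zero_of_abs_lt_one (abs_lt.mpr ⟨h.1, hlt⟩)⟩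

theorem Matrix.IsHermitian.exists_tendsto_pow {𝕜 n : Type*} [RCLike 𝕜] [Fintype n]
    [DecidableEq n] {N : Matrix n n 𝕜} (hN : N.IsHermitian)
    (h : ∀ k, hN.eigenvalues k ∈ Set.Ioc (-1) 1) :
    ∃ L, Tendsto (fun t : ℕ => N ^ t) atTop (𝓝 L) := by
  choose l hl using fun k => exists_tendsto_pow_of_mem_Ioc (h k)
  set U : Matrix n n 𝕜 := (hN.eigenvectorUnitary : Matrix n n 𝕜)
  have hpow : ∀ t : ℕ,
      N ^ t = U * diagonal (fun k => ((hN.eigenvalues k ^ t : ℝ) : 𝕜)) * star U := by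
    intro t
    conv_lhs => rw [hN.spectral_theorem]
    rw [← map_pow, diagonal_pow]
    simp [U, Function.comp_def, Pi.pow_def]
  refine ⟨U * diagonal (fun k => (l k : 𝕜)) * star U, ?_⟩
  simp only [hpow]
  refine (tendsto_const_nhds.mul ?_).mul tendsto_const_nhds
  refine (continuous_id.matrix_diagonal.tendsto _).comp (tendsto_pi_nhds.mpr fun k => ?_)
  exact (RCLike.continuous_ofReal.tendsto _).comp (hl k)

theorem Matrix.mulVec_eq_of_tendsto_pow_mulVec {n R : Type*} [Fintype n] [DecidableEq n]
    [Semiring R] [TopologicalSpace R] [IsTopologicalSemiring R] [T2Space R] {P : Matrix n n R}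
    {y L : n → R} (h : Tendsto (fun t : ℕ => P ^ t *ᵥ y) atTop (𝓝 L)) : P *ᵥ L = L := by
  have hshift : Tendsto (fun t : ℕ => P *ᵥ (P ^ t *ᵥ y)) atTop (𝓝 L) := by
    simpa [mulVec_mulVec, ← pow_succ'] using (tendsto_add_atTop_iff_nat 1).mpr h
  exact tendsto_nhds_unique (((continuous_const.matrix_mulVec continuous_id).tendsto L).comp h)
    hshift

theorem Matrix.vecMul_pow_eq_of_vecMul_eq {n R : Type*} [Fintype n] [DecidableEq n] [Semiring R]
    {P : Matrix n n R} {v : n → R} (h : v ᵥ* P = v) (t : ℕ) : v ᵥ* P ^ t = v := by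
  induction t with
  | zero => simp
  | succ t ih => rw [pow_succ, ← vecMul_vecMul, ih, h]

theorem SemiconjBy.tendsto_pow_mulVec {n R : Type*} [Fintype n] [DecidableEq n] [Semiring R]
    [TopologicalSpace R] [IsTopologicalSemiring R] {S N P : Matrix n n R} (h : SemiconjBy S N P)
    {z L : n → R} (hN : Tendsto (fun t : ℕ => N ^ t *ᵥ z) atTop (𝓝 L)) :
    Tendsto (fun t : ℕ => P ^ t *ᵥ (S *ᵥ z)) atTop (𝓝 (S *ᵥ L)) := by
  have hpow : ∀ t : ℕ, P ^ t *ᵥ (S *ᵥ z) = S *ᵥ (N ^ t *ᵥ z) := fun t => by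
    rw [mulVec_mulVec, ← (h.pow_right t).eq, ← mulVec_mulVec]
  simp only [hpow]
  exact ((continuous_const.matrix_mulVec continuous_id).tendsto L).comp hN

section RandomWalk

variable {V : Type*} {A : Matrix V V ℝ} {q : V → ℝ}

noncomputable def randomWalk (A : Matrix V V ℝ) (q : V → ℝ) : Matrix V V ℂ :=
  of fun i j => ((A i j / q i : ℝ) : ℂ)

noncomputable def symmetrizedWalk (A : Matrix V V ℝ) (q : V → ℝ) : Matrix V V ℂ :=
  of fun i j => ((A i j / (√(q i) * √(q j)) : ℝ) : ℂ)

theorem isHermitian_symmetrizedWalk (hA : A.IsSymm) : (symmetrizedWalk A q).IsHermitian := by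
  ext i j
  simp [symmetrizedWalk, hA.apply i j, mul_comm]

variable [Fintype V]

theorem semiconjBy_symmetrizedWalk [DecidableEq V] (hqpos : ∀ i, 0 < q i) :
    SemiconjBy (diagonal fun i => ((√(q i))⁻¹ : ℂ)) (symmetrizedWalk A q) (randomWalk A q) := by
  ext i j
  have hr : ∀ i, (√(q i) : ℂ) ≠ 0 := fun i =>
    Complex.ofReal_ne_zero.mpr (Real.sqrt_pos.mpr (hqpos i)).ne'
  have hrq : (√(q i) : ℂ) * √(q i) = q i := by
    rw [← Complex.ofReal_mul, Real.mul_self_sqrt (hqpos i).le]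
  simp only [diagonal_mul, mul_diagonal, symmetrizedWalk, randomWalk, of_apply]
  push_cast
  rw [← hrq]
  field_simp

theorem randomWalk_mulVec_apply (u : V → ℂ) (i : V) :
    (randomWalk A q *ᵥ u) i = (q i)⁻¹ • ∑ j, A i j • u j := by
  simp only [randomWalk, mulVec, dotProduct, of_apply, Finset.smul_sum, Complex.real_smul]
  push_cast
  exact Finset.sum_congr rfl fun j _ => by ring

theorem vecMul_randomWalk (hq : ∀ i, q i = ∑ j, A i j) (hqpos : ∀ i, 0 < q i) (hA : A.IsSymm) :
    (fun i => (q i : ℂ)) ᵥ* randomWalk A q = fun i => (q i : ℂ) := by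
  funext j
  have hq0 : ∀ i, (q i : ℂ) ≠ 0 := fun i => Complex.ofReal_ne_zero.mpr (hqpos i).ne'
  simp only [vecMul, dotProduct, randomWalk, of_apply, hq j, ← hA.apply j, Complex.ofReal_sum]
  push_cast
  exact Finset.sum_congr rfl fun i _ => mul_div_cancel₀ _ (hq0 i)

variable (hA0 : ∀ i j, 0 ≤ A i j) (hq : ∀ i, q i = ∑ j, A i j) (hqpos : ∀ i, 0 < q i)
include hA0 hq hqpos

theorem norm_randomWalk_mulVec_apply_le {u : V → ℂ} {m : ℝ} (hu : ∀ j, ‖u j‖ ≤ m) (i : V) :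
    ‖(randomWalk A q *ᵥ u) i‖ ≤ m := by
  rw [randomWalk_mulVec_apply, norm_smul, Real.norm_of_nonneg (inv_nonneg.mpr (hqpos i).le),
    inv_mul_le_iff₀ (hqpos i)]
  calc ‖∑ j, A i j • u j‖ ≤ ∑ j, A i j * m := by
        refine (norm_sum_le _ _).trans (Finset.sum_le_sum fun j _ => ?_)
        rw [norm_smul, Real.norm_of_nonneg (hA0 i j)]
        exact mul_le_mul_of_nonneg_left (hu j) (hA0 i j)
    _ = q i * m := by rw [← Finset.sum_mul, hq]

theorem abs_le_one_of_randomWalk_mulVec_eq_smul {u : V → ℂ} (hu0 : u ≠ 0) {μ : ℝ}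
    (hu : randomWalk A q *ᵥ u = (μ : ℂ) • u) : |μ| ≤ 1 := by
  obtain ⟨i, hi⟩ := Function.ne_iff.mp hu0
  have : Nonempty V := ⟨i⟩
  obtain ⟨a, -, ha⟩ := Finset.exists_max_image Finset.univ (fun j => ‖u j‖) Finset.univ_nonempty
  have hpos : 0 < ‖u a‖ := (norm_pos_iff.mpr hi).trans_le (ha i (Finset.mem_univ i))
  have := norm_randomWalk_mulVec_apply_le hA0 hq hqpos (fun j => ha j (Finset.mem_univ j)) a
  rw [hu, Pi.smul_apply, norm_smul, Complex.norm_real, Real.norm_eq_abs] at this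
  exact (mul_le_iff_le_one_left hpos).mp this

theorem eq_smul_of_randomWalk_mulVec_eq_smul {u : V → ℂ} {μ : ℝ}
    (hu : randomWalk A q *ᵥ u = (μ : ℂ) • u) (hμ : |μ| = 1) {a : V}
    (hmax : ∀ j, ‖u j‖ ≤ ‖u a‖) {b : V} (hab : A a b ≠ 0) : u b = μ • u a := by
  have hsum : ∑ j, A a j • u j = (∑ j, A a j) • (μ • u a) := by
    have := congrFun hu a
    rw [randomWalk_mulVec_apply, Pi.smul_apply, Complex.coe_smul,
      inv_smul_eq_iff₀ (hqpos a).ne'] at this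
    rw [this, ← hq]
  refine eq_of_sum_smul_eq_of_norm_le (fun j _ => hA0 a j) (fun j _ => ?_) hsum
    (Finset.mem_univ b) hab
  rw [norm_smul, Real.norm_eq_abs, hμ, one_mul]
  exact hmax j

variable (hA : A.IsSymm)
include hA

theorem eq_pow_smul_of_randomWalk_mulVec_eq_smul {u : V → ℂ} {μ : ℝ}
    (hu : randomWalk A q *ᵥ u = (μ : ℂ) • u) (hμ : |μ| = 1) {a b : V}
    (p : (SimpleGraph.fromRel fun i j => A i j ≠ 0).Walk a b) (hmax : ∀ j, ‖u j‖ ≤ ‖u a‖) :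
    u b = μ ^ p.length • u a := by
  induction p with
  | nil => simp
  | @cons a c b hac p ih =>
    have hAac : A a c ≠ 0 := by
      rcases ((SimpleGraph.fromRel_adj _ _ _).mp hac).2 with h | h
      · exact h
      · rwa [← hA.apply a c]
    have hc := eq_smul_of_randomWalk_mulVec_eq_smul hA0 hq hqpos hu hμ hmax hAac
    have hnorm : ‖u c‖ = ‖u a‖ := by rw [hc, norm_smul, Real.norm_eq_abs, hμ, one_mul]
    rw [ih (fun j => hnorm ▸ hmax j), hc, smul_smul, SimpleGraph.Walk.length_cons, pow_succ]

variable (hconn : (SimpleGraph.fromRel fun i j => A i j ≠ 0).Connected)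
include hconn

theorem eq_const_of_randomWalk_mulVec_eq {u : V → ℂ} (hu : randomWalk A q *ᵥ u = u) :
    ∃ c, u = fun _ => c := by
  have : Nonempty V := hconn.nonempty
  obtain ⟨a, -, ha⟩ := Finset.exists_max_image Finset.univ (fun j => ‖u j‖) Finset.univ_nonempty
  have hu1 : randomWalk A q *ᵥ u = ((1 : ℝ) : ℂ) • u := by rw [hu]; simp
  refine ⟨u a, funext fun b => ?_⟩
  simpa using eq_pow_smul_of_randomWalk_mulVec_eq_smul hA0 hq hqpos hA hu1 (by norm_num)
    (hconn a b).some fun j => ha j (Finset.mem_univ j)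

variable (hnb : ¬ (SimpleGraph.fromRel fun i j => A i j ≠ 0).Colorable 2)
include hnb

theorem mem_Ioc_of_randomWalk_mulVec_eq_smul {u : V → ℂ} (hu0 : u ≠ 0) {μ : ℝ}
    (hu : randomWalk A q *ᵥ u = (μ : ℂ) • u) : μ ∈ Set.Ioc (-1) 1 := by
  have hμ := abs_le_one_of_randomWalk_mulVec_eq_smul hA0 hq hqpos hu0 hu
  refine ⟨lt_of_le_of_ne (abs_le.mp hμ).1 fun hμ1 => ?_, (abs_le.mp hμ).2⟩
  subst hμ1
  obtain ⟨c, p, hp⟩ : ∃ c, ∃ p : (SimpleGraph.fromRel fun i j => A i j ≠ 0).Walk c c,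
      ¬ Even p.length := by
    simpa [SimpleGraph.two_colorable_iff_forall_loop_even] using hnb
  have : Nonempty V := hconn.nonempty
  obtain ⟨a, -, ha⟩ := Finset.exists_max_image Finset.univ (fun j => ‖u j‖) Finset.univ_nonempty
  have hmax : ∀ j, ‖u j‖ ≤ ‖u a‖ := fun j => ha j (Finset.mem_univ j)
  have hca := eq_pow_smul_of_randomWalk_mulVec_eq_smul hA0 hq hqpos hA hu (by norm_num)
    (hconn a c).some hmax
  have hmaxc : ∀ j, ‖u j‖ ≤ ‖u c‖ := by simpa [hca] using hmax
  have hcc := eq_pow_smul_of_randomWalk_mulVec_eq_smul hA0 hq hqpos hA hu (by norm_num) p hmaxc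
  rw [(Nat.not_even_iff_odd.mp hp).neg_one_pow, neg_one_smul, self_eq_neg] at hcc
  exact hu0 (funext fun j => by simpa [hcc] using hmaxc j)

theorem exists_tendsto_randomWalk_pow_mulVec [DecidableEq V] (y : V → ℂ) :
    ∃ L, Tendsto (fun t : ℕ => randomWalk A q ^ t *ᵥ y) atTop (𝓝 L) := by
  set D : Matrix V V ℂ := diagonal fun i => ((√(q i))⁻¹ : ℂ)
  have hN := isHermitian_symmetrizedWalk (q := q) hA
  have hsemi : SemiconjBy D _ _ := semiconjBy_symmetrizedWalk (A := A) hqpos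
  have hr : ∀ i, (√(q i) : ℂ) ≠ 0 := fun i =>
    Complex.ofReal_ne_zero.mpr (Real.sqrt_pos.mpr (hqpos i)).ne'
  have hD : ∀ {v : V → ℂ}, D *ᵥ v = 0 → v = 0 := fun h => funext fun i => by
    simpa [D, mulVec_diagonal, hr i] using congrFun h i
  have heig : ∀ k, hN.eigenvalues k ∈ Set.Ioc (-1) 1 := fun k => by
    refine mem_Ioc_of_randomWalk_mulVec_eq_smul hA0 hq hqpos hA hconn hnb
      (u := D *ᵥ hN.eigenvectorBasis k) (fun h => ?_) ?_
    · exact hN.eigenvectorBasis.orthonormal.ne_zero k (by ext i; simpa using congrFun (hD h) i)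
    · rw [mulVec_mulVec, ← hsemi.eq, ← mulVec_mulVec, hN.mulVec_eigenvectorBasis, mulVec_smul,
        Complex.coe_smul]
  obtain ⟨L, hL⟩ := hN.exists_tendsto_pow heig
  have hDz : D *ᵥ (diagonal (fun i => (√(q i) : ℂ)) *ᵥ y) = y := by
    simp [D, mulVec_mulVec, diagonal_mul_diagonal, inv_mul_cancel₀ (hr _)]
  refine ⟨_, hDz ▸ hsemi.tendsto_pow_mulVec
    (((continuous_id.matrix_mulVec continuous_const).tendsto L).comp hL)⟩

theorem tendsto_randomWalk_pow_mulVec [DecidableEq V] (y : V → ℂ) :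
    Tendsto (fun t : ℕ => randomWalk A q ^ t *ᵥ y) atTop
      (𝓝 fun _ => (∑ k, (q k : ℂ) * y k) / ∑ k, (q k : ℂ)) := by
  obtain ⟨L, hL⟩ := exists_tendsto_randomWalk_pow_mulVec hA0 hq hqpos hA hconn hnb y
  obtain ⟨c, rfl⟩ := eq_const_of_randomWalk_mulVec_eq hA0 hq hqpos hA hconn
    (mulVec_eq_of_tendsto_pow_mulVec hL)
  set π : V → ℂ := fun i => (q i : ℂ)
  have hstat : ∀ t : ℕ, π ⬝ᵥ (randomWalk A q ^ t *ᵥ y) = π ⬝ᵥ y := fun t => by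
    rw [dotProduct_mulVec, vecMul_pow_eq_of_vecMul_eq (vecMul_randomWalk hq hqpos hA)]
  have hc : π ⬝ᵥ (fun _ => c) = π ⬝ᵥ y :=
    tendsto_nhds_unique (((continuous_const.dotProduct continuous_id :
      Continuous fun v : V → ℂ => π ⬝ᵥ v).tendsto _).comp hL) (by simp [Function.comp_def, hstat])
  have : Nonempty V := hconn.nonempty
  have hπ : ∑ k, π k ≠ 0 := by
    rw [← Complex.ofReal_sum, Complex.ofReal_ne_zero]
    exact (Finset.sum_pos (fun k _ => hqpos k) Finset.univ_nonempty).ne'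
  convert hL using 3
  rw [div_eq_iff hπ]
  simpa [dotProduct, π, Finset.mul_sum, mul_comm] using hc.symm

end RandomWalk

theorem semiconjBy_diagonal_randomWalk {V : Type*} [Fintype V] [DecidableEq V]
    {W P : Matrix V V ℂ} {s : V → ℂ} {q : V → ℝ} (hs : ∀ v, ‖s v‖ = 1)
    (hbal : ∀ u v, W u v = s u * starRingEnd ℂ (s v) * ((‖W u v‖ : ℝ) : ℂ))
    (hP : ∀ i j, P i j = W i j / (q i : ℂ)) :
    SemiconjBy (diagonal s) (randomWalk (of fun i j => ‖W i j‖) q) P := by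
  ext i j
  have hss : starRingEnd ℂ (s j) * s j = 1 := by rw [Complex.conj_mul', hs j]; norm_num
  rw [diagonal_mul, mul_diagonal, hP, hbal]
  simp only [randomWalk, of_apply]
  push_cast
  linear_combination (s i * ‖W i j‖ / q i) * hss.symm

/-- For a structurally balanced, connected, non-bipartite Hermitian complex-weighted graph
with `W u v = s u · conj (s v) · |W u v|`, the complex random walk `x(t+1) = P x(t)` with
`P = Q⁻¹ W` converges, from any initial `x`, to the steady state
`x̂ j = s j · (∑ k conj (s k) q k x k) / (∑ k q k)`. -/
theorem stmt11 {n : ℕ} (W : Matrix (Fin n) (Fin n) ℂ) (hW : W.IsHermitian)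
    (s : Fin n → ℂ) (hs : ∀ v, ‖s v‖ = 1)
    (hbal : ∀ u v, W u v = s u * starRingEnd ℂ (s v) * ((‖W u v‖ : ℝ) : ℂ))
    (hconn : (SimpleGraph.fromRel fun i j => W i j ≠ 0).Connected)
    (hnb : ¬ (SimpleGraph.fromRel fun i j => W i j ≠ 0).Colorable 2)
    (q : Fin n → ℝ) (hq : ∀ i, q i = ∑ j, ‖W i j‖) (hqpos : ∀ i, 0 < q i)
    (P : Matrix (Fin n) (Fin n) ℂ) (hP : ∀ i j, P i j = W i j / (q i : ℂ))
    (x : Fin n → ℂ) :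
    Filter.Tendsto (fun t => (P ^ t).mulVec x) Filter.atTop
      (nhds fun j =>
        s j * (∑ k, starRingEnd ℂ (s k) * (q k : ℂ) * x k) / (∑ k, (q k : ℂ))) := by
  set A : Matrix (Fin n) (Fin n) ℝ := of fun i j => ‖W i j‖
  have hA : A.IsSymm := by
    ext i j
    simp [A, ← hW.apply i j]
  have hgraph : (SimpleGraph.fromRel fun i j => W i j ≠ 0)
      = SimpleGraph.fromRel fun i j => A i j ≠ 0 := by
    simp [A]
  have hwalk := tendsto_randomWalk_pow_mulVec (A := A) (fun i j => norm_nonneg (W i j)) hq hqpos hA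
    (hgraph ▸ hconn) (hgraph ▸ hnb) (diagonal (starRingEnd ℂ ∘ s) *ᵥ x)
  have hx : diagonal s *ᵥ (diagonal (starRingEnd ℂ ∘ s) *ᵥ x) = x := by
    simp [mulVec_mulVec, diagonal_mul_diagonal, Complex.mul_conj', hs]
  convert hx ▸ (semiconjBy_diagonal_randomWalk hs hbal hP).tendsto_pow_mulVec hwalk using 2
  funext j
  simp [mulVec_diagonal, mul_div_assoc, mul_comm, mul_left_comm]
end

section
/- Let G = (V, E) be an unweighted, undirected, connected graph and 𝒱 = {V_1, ..., V_p} a partition of its nodes. Then there exists a Hermitian complex weight matrix W supported on E ∪ {self-loops} such that, starting from any initial feature vector x(0) with Σ_k conj(s(k)) q_k x_k(0) ≠ 0, in the steady state of the complex random walk x(t+1) = (Q^{-1}W) x(t), all nodes within the same subset V_i have features of the same phase, and nodes in different subsets have features of distinct phases. -/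
/-!
Give node `v` the phase `s v = ζ ^ σ(v)`, `ζ = exp (2πi/p)`, and take
`W = diag(s) (A + I) diag(s)*` with `A` the adjacency matrix of `G`. Then `Q = D := diag(deg + 1)`
and `Q⁻¹W = diag(s) P diag(s)*` for the lazy random walk `P = D⁻¹ (A + I)`, so it suffices that
`P^t → 1 πᵀ`, with `π` the normalized diagonal of `D`.

`P` is similar to the symmetric `S = D^{-1/2} (A + I) D^{-1/2}`. As `D - (A + I)` is the Laplacian
and `D + (A + I)` the signless Laplacian plus `2`, the spectrum of `S` lies in `(-1, 1]`, so `S^t`,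
hence `P^t`, converges. The limit `Π` satisfies `PΠ = Π` and `πᵀΠ = πᵀ`; `P`-harmonic vectors lie
in the kernel of the Laplacian, hence are constant on a connected graph, which forces `Π = 1 πᵀ`.
The steady state is then `x̂_j = s_j c / m` with `c ≠ 0`, whose phase is `s_j` times a common phase.
-/

open Matrix Filter Topology Finset
open scoped ComplexOrder

section

variable {n : Type*} [Fintype n] [DecidableEq n] {𝕜 : Type*} [RCLike 𝕜]

theorem tendsto_ofReal_pow_of_mem_Ioc {μ : ℝ} (hμ : μ ∈ Set.Ioc (-1) 1) :
    Tendsto (fun t : ℕ => (μ : 𝕜) ^ t) atTop (𝓝 (if μ = 1 then 1 else 0)) := by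
  split_ifs with h
  · simp [h]
  · refine tendsto_pow_atTop_nhds_zero_of_norm_lt_one ?_
    rw [RCLike.norm_ofReal, abs_lt]
    exact ⟨hμ.1, lt_of_le_of_ne hμ.2 h⟩

theorem Matrix.IsHermitian.eigenvalues_mem_Ioc {S : Matrix n n 𝕜} (hS : S.IsHermitian)
    (h₁ : (1 + S).PosDef) (h₂ : (1 - S).PosSemidef) (i : n) :
    hS.eigenvalues i ∈ Set.Ioc (-1) 1 := by
  set v : n → 𝕜 := ⇑(hS.eigenvectorBasis i)
  have hv : RCLike.re (star v ⬝ᵥ v) = 1 := by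
    rw [dotProduct_comm, ← EuclideanSpace.inner_eq_star_dotProduct, inner_self_eq_norm_sq,
      hS.eigenvectorBasis.orthonormal.1 i, one_pow]
  have hv0 : v ≠ 0 := fun h => by simp [h] at hv
  have hpos := h₁.re_dotProduct_pos hv0
  have hnonneg := h₂.re_dotProduct_nonneg v
  rw [add_mulVec, one_mulVec, dotProduct_add, map_add, hv] at hpos
  rw [sub_mulVec, one_mulVec, dotProduct_sub, map_sub, hv] at hnonneg
  rw [hS.eigenvalues_eq i]
  constructor <;> linarith

theorem Matrix.IsHermitian.exists_tendsto_pow_s12 {S : Matrix n n 𝕜} (hS : S.IsHermitian)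
    (hμ : ∀ i, hS.eigenvalues i ∈ Set.Ioc (-1) 1) :
    ∃ L, Tendsto (fun t : ℕ => S ^ t) atTop (𝓝 L) := by
  set U : Matrix n n 𝕜 := (hS.eigenvectorUnitary : Matrix n n 𝕜)
  have hpow : ∀ t : ℕ, S ^ t = U * diagonal (fun i => (hS.eigenvalues i : 𝕜) ^ t) * star U := by
    intro t
    conv_lhs => rw [hS.spectral_theorem]
    rw [← map_pow, diagonal_pow, Unitary.conjStarAlgAut_apply]
    rfl
  have hdiag : Tendsto (fun t : ℕ => diagonal fun i => (hS.eigenvalues i : 𝕜) ^ t) atTop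
      (𝓝 (diagonal fun i => if hS.eigenvalues i = 1 then 1 else 0)) :=
    (continuous_id.matrix_diagonal.tendsto _).comp
      (tendsto_pi_nhds.2 fun i => tendsto_ofReal_pow_of_mem_Ioc (hμ i))
  simp_rw [hpow]
  exact ⟨_, (hdiag.const_mul U).mul_const (star U)⟩

theorem Matrix.exists_tendsto_pow_diagonal_inv_mul {A : Matrix n n ℝ} {d : n → ℝ}
    (hd : ∀ i, 0 < d i) (h₁ : (diagonal d + A).PosDef) (h₂ : (diagonal d - A).PosSemidef) :
    ∃ L, Tendsto (fun t : ℕ => (diagonal d⁻¹ * A) ^ t) atTop (𝓝 L) := by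
  set r : n → ℝ := fun i => √(d i)
  have hr : ∀ i, r i ≠ 0 := fun i => (Real.sqrt_pos.2 (hd i)).ne'
  set R : Matrix n n ℝ := diagonal r⁻¹
  have hRR : R * R = diagonal d⁻¹ := by
    simp only [R, diagonal_mul_diagonal, Pi.inv_apply, ← mul_inv, r, Real.mul_self_sqrt (hd _).le]
    rfl
  have hRr : R * diagonal r = 1 := by
    simp [R, diagonal_mul_diagonal, hr, diagonal_one]
  have hrR : diagonal r * R = 1 := by
    simp [R, diagonal_mul_diagonal, hr, diagonal_one]
  have hRdR : R * diagonal d * R = 1 := by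
    rw [show R * diagonal d * R = R * R * diagonal d by
      simp only [R, diagonal_mul_diagonal, mul_right_comm], hRR, diagonal_mul_diagonal]
    simp [(hd _).ne', diagonal_one]
  have hR : Function.Injective R.mulVec := fun x y h => by
    simpa [mulVec_mulVec, hrR] using congrArg (diagonal r *ᵥ ·) h
  have hRH : Rᴴ = R := by simp [R]
  set S := R * A * R
  have hS₁ : (1 + S).PosDef := by
    have := h₁.conjTranspose_mul_mul_same hR
    rwa [hRH, mul_add, add_mul, hRdR] at this
  have hS₂ : (1 - S).PosSemidef := by
    have := h₂.conjTranspose_mul_mul_same R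
    rwa [hRH, mul_sub, sub_mul, hRdR] at this
  have hS : S.IsHermitian := by simpa using hS₁.isHermitian.sub (isHermitian_one (α := ℝ))
  obtain ⟨L, hL⟩ := hS.exists_tendsto_pow_s12 (hS.eigenvalues_mem_Ioc hS₁ hS₂)
  have hconj : SemiconjBy R S (diagonal d⁻¹ * A) := by
    simp only [SemiconjBy, S, ← hRR, Matrix.mul_assoc]
  refine ⟨R * L * diagonal r, ?_⟩
  have hpow : ∀ t : ℕ, (diagonal d⁻¹ * A) ^ t = R * S ^ t * diagonal r := fun t => by
    rw [(hconj.pow_right t).eq, Matrix.mul_assoc, hRr, Matrix.mul_one]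
  simp_rw [hpow]
  exact (hL.const_mul R).mul_const _

theorem Matrix.eq_of_tendsto_pow_of_vecMul_eq {R : Type*} [CommRing R] [TopologicalSpace R]
    [IsTopologicalRing R] [T2Space R] {P L : Matrix n n R}
    (hL : Tendsto (fun t : ℕ => P ^ t) atTop (𝓝 L))
    (hfix : ∀ y, P *ᵥ y = y → ∀ i j, y i = y j) {π : n → R} (hπ : π ᵥ* P = π)
    (hπ₁ : ∑ i, π i = 1) : L = of fun _ k => π k := by
  have hPL : P * L = L := tendsto_nhds_unique (hL.const_mul P) <| by
    simpa only [Function.comp_def, pow_succ'] using hL.comp (tendsto_add_atTop_nat 1)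
  have hπL : π ᵥ* L = π := by
    have hπt : ∀ t : ℕ, π ᵥ* P ^ t = π := fun t => by
      induction t with
      | zero => simp
      | succ t ih => rw [pow_succ, ← vecMul_vecMul, ih, hπ]
    refine tendsto_nhds_unique
      ((continuous_const.matrix_vecMul continuous_id).tendsto L |>.comp hL) ?_
    simp only [Function.comp_def, id, hπt, tendsto_const_nhds]
  have hcol : ∀ k i j, L i k = L j k := fun k =>
    hfix (fun i => L i k) (funext fun i => by
      simpa [mulVec, dotProduct, mul_apply] using congrFun (congrFun hPL i) k)
  ext i k
  calc L i k = ∑ j, π j * L j k := by simp [← hcol k i, ← Finset.sum_mul, hπ₁]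
    _ = π k := congrFun hπL k

end

namespace SimpleGraph

variable {V : Type*} (G : SimpleGraph V) [DecidableRel G.Adj] [DecidableEq V]

def loopAdjMatrix : Matrix V V ℝ := G.adjMatrix ℝ + 1

theorem isSymm_loopAdjMatrix : G.loopAdjMatrix.IsSymm :=
  G.isSymm_adjMatrix.add isSymm_one

theorem loopAdjMatrix_nonneg (i j : V) : 0 ≤ G.loopAdjMatrix i j := by
  by_cases h : i = j <;> simp [loopAdjMatrix, one_apply, adjMatrix_apply, h, apply_ite]

theorem loopAdjMatrix_apply_eq_zero {i j : V} (hij : i ≠ j) (h : ¬G.Adj i j) :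
    G.loopAdjMatrix i j = 0 := by
  simp [loopAdjMatrix, hij, h]

variable [Fintype V]

theorem dotProduct_mulVec_degMatrix_add_adjMatrix (R : Type*) [Field R] [CharZero R]
    (x : V → R) :
    x ⬝ᵥ ((G.degMatrix R + G.adjMatrix R) *ᵥ x) =
      (∑ i : V, ∑ j : V, if G.Adj i j then (x i + x j) ^ 2 else 0) / 2 := by
  simp_rw [add_mulVec, dotProduct_add, dotProduct_mulVec_degMatrix,
    dotProduct_mulVec_adjMatrix, ← sum_add_distrib, degree_eq_sum_if_adj, sum_mul, ite_mul,
    one_mul, zero_mul, ← sum_add_distrib, ite_add_ite, add_zero]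
  rw [← add_self_div_two (∑ i : V, ∑ j : V, _)]
  conv_lhs => enter [1, 2, 2, i, 2, j]; rw [if_congr (adj_comm G i j) rfl rfl]
  conv_lhs => enter [1, 2]; rw [Finset.sum_comm]
  simp_rw [← sum_add_distrib, ite_add_ite]
  congr 2 with i
  congr 2 with j
  ring_nf

theorem posSemidef_degMatrix_add_adjMatrix (R : Type*) [Field R] [LinearOrder R]
    [IsStrictOrderedRing R] [StarRing R] [TrivialStar R] :
    (G.degMatrix R + G.adjMatrix R).PosSemidef := by
  refine .of_dotProduct_mulVec_nonneg
    ((G.isHermitian_degMatrix R).add (G.isHermitian_adjMatrix R)) fun x => ?_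
  rw [star_trivial, dotProduct_mulVec_degMatrix_add_adjMatrix]
  positivity

def loopDegree (i : V) : ℝ := G.degree i + 1

omit [DecidableEq V] in
theorem loopDegree_pos (i : V) : 0 < G.loopDegree i := by
  unfold loopDegree; positivity

omit [DecidableEq V] in
theorem sum_loopDegree_pos [Nonempty V] : 0 < ∑ i, G.loopDegree i :=
  Finset.sum_pos (fun i _ => G.loopDegree_pos i) univ_nonempty

theorem loopAdjMatrix_mulVec_one : G.loopAdjMatrix *ᵥ 1 = G.loopDegree := by
  ext i
  simp [loopAdjMatrix, add_mulVec, loopDegree]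

theorem sum_loopAdjMatrix_apply (i : V) : ∑ j, G.loopAdjMatrix i j = G.loopDegree i := by
  simpa [mulVec, dotProduct] using congrFun G.loopAdjMatrix_mulVec_one i

theorem diagonal_loopDegree : diagonal G.loopDegree = G.degMatrix ℝ + 1 := by
  rw [degMatrix, ← diagonal_one, diagonal_add]
  rfl

theorem diagonal_loopDegree_sub_loopAdjMatrix :
    diagonal G.loopDegree - G.loopAdjMatrix = G.lapMatrix ℝ := by
  rw [diagonal_loopDegree, loopAdjMatrix, add_sub_add_right_eq_sub]
  rfl

theorem posDef_diagonal_loopDegree_add_loopAdjMatrix :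
    (diagonal G.loopDegree + G.loopAdjMatrix).PosDef := by
  rw [diagonal_loopDegree, loopAdjMatrix, add_add_add_comm, one_add_one_eq_two]
  exact PosDef.posSemidef_add (G.posSemidef_degMatrix_add_adjMatrix ℝ) (.ofNat 2)

noncomputable def loopWalkMatrix : Matrix V V ℝ := diagonal G.loopDegree⁻¹ * G.loopAdjMatrix

variable {G} in
theorem Connected.eq_of_loopWalkMatrix_mulVec_eq (hG : G.Connected) {y : V → ℝ}
    (hy : G.loopWalkMatrix *ᵥ y = y) (i j : V) : y i = y j := by
  have hAy : G.loopAdjMatrix *ᵥ y = diagonal G.loopDegree *ᵥ y := by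
    conv_rhs => rw [← hy, loopWalkMatrix, mulVec_mulVec, ← Matrix.mul_assoc, diagonal_mul_diagonal]
    simp [(G.loopDegree_pos _).ne']
  have hL : G.lapMatrix ℝ *ᵥ y = 0 := by
    rw [← diagonal_loopDegree_sub_loopAdjMatrix, sub_mulVec, hAy, sub_self]
  exact (lapMatrix_mulVec_eq_zero_iff_forall_reachable G).1 hL i j (hG.preconnected i j)

theorem loopDegree_vecMul_loopWalkMatrix :
    G.loopDegree ᵥ* G.loopWalkMatrix = G.loopDegree := by
  have h : G.loopDegree ᵥ* diagonal G.loopDegree⁻¹ = 1 := by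
    ext i
    simp [vecMul_diagonal, (G.loopDegree_pos i).ne']
  rw [loopWalkMatrix, ← vecMul_vecMul, h, ← mulVec_transpose, G.isSymm_loopAdjMatrix.eq, loopAdjMatrix_mulVec_one]

variable {G} in
theorem Connected.tendsto_pow_loopWalkMatrix (hG : G.Connected) :
    Tendsto (fun t : ℕ => G.loopWalkMatrix ^ t) atTop
      (𝓝 (of fun _ k => G.loopDegree k / ∑ l, G.loopDegree l)) := by
  obtain ⟨L, hL⟩ : ∃ L, Tendsto (fun t : ℕ => G.loopWalkMatrix ^ t) atTop (𝓝 L) :=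
    exists_tendsto_pow_diagonal_inv_mul G.loopDegree_pos
      G.posDef_diagonal_loopDegree_add_loopAdjMatrix
      (G.diagonal_loopDegree_sub_loopAdjMatrix ▸ posSemidef_lapMatrix ℝ G)
  have := hG.nonempty
  convert hL
  refine (eq_of_tendsto_pow_of_vecMul_eq hL (fun y hy => hG.eq_of_loopWalkMatrix_mulVec_eq hy) ?_ ?_).symm
  · have hπ : (fun k => G.loopDegree k / ∑ l, G.loopDegree l) =
        (∑ l, G.loopDegree l)⁻¹ • G.loopDegree := by
      ext; simp [div_eq_inv_mul]
    rw [hπ, smul_vecMul, loopDegree_vecMul_loopWalkMatrix]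
  · rw [← Finset.sum_div, div_self G.sum_loopDegree_pos.ne']

end SimpleGraph

namespace Matrix

variable {n : Type*} [Fintype n] [DecidableEq n] {𝕜 : Type*} [RCLike 𝕜]

def phaseTwist (s : n → 𝕜) (B : Matrix n n ℝ) : Matrix n n 𝕜 :=
  diagonal s * B.map (↑) * diagonal (star s)

theorem phaseTwist_apply (s : n → 𝕜) (B : Matrix n n ℝ) (i j : n) :
    phaseTwist s B i j = s i * B i j * star (s j) := by
  simp [phaseTwist, diagonal_mul, mul_diagonal]

theorem isHermitian_phaseTwist (s : n → 𝕜) {B : Matrix n n ℝ} (hB : B.IsSymm) :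
    (phaseTwist s B).IsHermitian := by
  ext i j
  simp only [conjTranspose_apply, phaseTwist_apply, star_mul', RCLike.star_def,
    RCLike.conj_ofReal, RCLike.conj_conj, hB.apply i j]
  ring

theorem phaseTwist_diagonal_inv_mul (s : n → 𝕜) (q : n → ℝ) (B : Matrix n n ℝ) :
    phaseTwist s (diagonal q⁻¹ * B) = of fun i j => phaseTwist s B i j / (q i : 𝕜) := by
  ext i j
  simp only [phaseTwist_apply, diagonal_mul, of_apply, Pi.inv_apply, RCLike.ofReal_mul,
    RCLike.ofReal_inv]
  ring

theorem phaseTwist_of_mulVec_apply (s : n → 𝕜) (π : n → ℝ) (x : n → 𝕜) (j : n) :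
    (phaseTwist s (of fun _ k => π k) *ᵥ x) j = s j * ∑ k, star (s k) * π k * x k := by
  simp only [mulVec, dotProduct, phaseTwist_apply, of_apply, Finset.mul_sum]
  exact Finset.sum_congr rfl fun k _ => by ring

variable {s : n → 𝕜} (hs : ∀ i, ‖s i‖ = 1)
include hs

theorem norm_phaseTwist_apply (B : Matrix n n ℝ) (i j : n) :
    ‖phaseTwist s B i j‖ = |B i j| := by
  simp [phaseTwist_apply, hs]

theorem phaseTwist_pow (B : Matrix n n ℝ) (t : ℕ) :
    phaseTwist s B ^ t = phaseTwist s (B ^ t) := by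
  have hss : diagonal (star s) * diagonal s = 1 := by
    rw [diagonal_mul_diagonal, ← diagonal_one]
    congr 1; ext i
    rw [Pi.star_apply, RCLike.star_def, RCLike.conj_mul, hs, RCLike.ofReal_one, one_pow]
  have hconj : SemiconjBy (diagonal s) (B.map (↑)) (phaseTwist s B) := by
    rw [SemiconjBy, phaseTwist, Matrix.mul_assoc _ (diagonal (star s)), hss, Matrix.mul_one]
  calc phaseTwist s B ^ t = phaseTwist s B ^ t * diagonal s * diagonal (star s) := by
        rw [Matrix.mul_assoc, (commute_diagonal s (star s)).eq, hss, Matrix.mul_one]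
    _ = phaseTwist s (B ^ t) := by
        rw [← (hconj.pow_right t).eq, phaseTwist, Matrix.map_pow B (algebraMap ℝ 𝕜)]

theorem tendsto_phaseTwist_pow_mulVec {B L : Matrix n n ℝ}
    (hB : Tendsto (fun t : ℕ => B ^ t) atTop (𝓝 L)) (x : n → 𝕜) :
    Tendsto (fun t : ℕ => phaseTwist s B ^ t *ᵥ x) atTop (𝓝 (phaseTwist s L *ᵥ x)) := by
  simp_rw [phaseTwist_pow hs]
  refine (Continuous.tendsto (f := fun B : Matrix n n ℝ => phaseTwist s B *ᵥ x) ?_ L).comp hB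
  unfold phaseTwist
  fun_prop

end Matrix

theorem exists_norm_eq_one_and_eq_iff {ι : Type*} {p : ℕ} (σ : ι → Fin p) :
    ∃ s : ι → ℂ, (∀ i, ‖s i‖ = 1) ∧ ∀ u v, σ u = σ v ↔ s u = s v := by
  set ζ := Complex.exp (2 * Real.pi * Complex.I / p)
  have hζ : ∀ i, IsPrimitiveRoot ζ p := fun i => Complex.isPrimitiveRoot_exp p (σ i).pos.ne'
  refine ⟨fun i => ζ ^ (σ i : ℕ), fun i => ?_, fun u v => ⟨fun h => by simp only [h], fun h => ?_⟩⟩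
  · rw [norm_pow, (hζ i).norm'_eq_one (σ i).pos.ne', one_pow]
  · exact Fin.ext ((hζ u).pow_inj (σ u).2 (σ v).2 h)

theorem Complex.mul_div_norm_eq_iff {a b z : ℂ} (ha : ‖a‖ = 1) (hb : ‖b‖ = 1) (hz : z ≠ 0) :
    a * z / (‖a * z‖ : ℂ) = b * z / (‖b * z‖ : ℂ) ↔ a = b := by
  rw [norm_mul, norm_mul, ha, hb, one_mul, mul_div_assoc, mul_div_assoc]
  exact mul_left_inj' (div_ne_zero hz (by simpa using hz))

theorem stmt12_general {n p : ℕ} (G : SimpleGraph (Fin n)) (hconn : G.Connected)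
    (σ : Fin n → Fin p) :
    ∃ (W : Matrix (Fin n) (Fin n) ℂ) (s : Fin n → ℂ),
      W.IsHermitian ∧
      (∀ u v, u ≠ v → ¬ G.Adj u v → W u v = 0) ∧
      (∀ v, ‖s v‖ = 1) ∧
      (∀ u v, σ u = σ v ↔ s u = s v) ∧
      ∀ x : Fin n → ℂ,
        (∑ k, starRingEnd ℂ (s k) * ((∑ l, ‖W k l‖ : ℝ) : ℂ) * x k) ≠ 0 →
        ∃ xhat : Fin n → ℂ,
          Filter.Tendsto
            (fun t =>
              ((Matrix.of fun i j => W i j / ((∑ l, ‖W i l‖ : ℝ) : ℂ)) ^ t).mulVec x)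
            Filter.atTop (nhds xhat) ∧
          (∀ j, xhat j ≠ 0) ∧
          (∀ u v, σ u = σ v ↔
            xhat u / (‖xhat u‖ : ℂ) = xhat v / (‖xhat v‖ : ℂ)) := by
  classical
  have := hconn.nonempty
  obtain ⟨s, hs, hsσ⟩ := exists_norm_eq_one_and_eq_iff σ
  set W := phaseTwist s G.loopAdjMatrix
  have hq : ∀ i, ∑ l, ‖W i l‖ = G.loopDegree i := fun i => by
    simp only [W, norm_phaseTwist_apply hs, abs_of_nonneg (G.loopAdjMatrix_nonneg _ _),
      G.sum_loopAdjMatrix_apply]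
  refine ⟨W, s, isHermitian_phaseTwist s G.isSymm_loopAdjMatrix,
    fun u v huv h => by simp [W, phaseTwist_apply, G.loopAdjMatrix_apply_eq_zero huv h],
    hs, hsσ, fun x hx => ?_⟩
  set m := ∑ l, G.loopDegree l
  set c := ∑ k, starRingEnd ℂ (s k) * ((∑ l, ‖W k l‖ : ℝ) : ℂ) * x k
  have hcm : c / m ≠ 0 := div_ne_zero hx (mod_cast G.sum_loopDegree_pos.ne')
  refine ⟨fun j => s j * (c / m), ?_,
    fun j => mul_ne_zero (norm_ne_zero_iff.1 (by simp [hs j])) hcm,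
    fun u v => by rw [hsσ, Complex.mul_div_norm_eq_iff (hs u) (hs v) hcm]⟩
  have hM : (of fun i j => W i j / ((∑ l, ‖W i l‖ : ℝ) : ℂ)) =
      phaseTwist s G.loopWalkMatrix := by
    simp only [hq]
    exact (phaseTwist_diagonal_inv_mul s _ _).symm
  rw [hM]
  convert tendsto_phaseTwist_pow_mulVec hs hconn.tendsto_pow_loopWalkMatrix x using 2
  ext j
  rw [phaseTwist_of_mulVec_apply]
  simp only [c, m, hq, Finset.sum_div, Complex.star_def, RCLike.ofReal_eq_complex_ofReal]
  push_cast
  exact congrArg _ (Finset.sum_congr rfl fun k _ => by ring)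

/-- For any connected unweighted undirected graph and any partition of its nodes (given by
a surjection `σ` onto `Fin p`), there exists a Hermitian complex weight matrix supported on
the edges and self-loops such that, for every initial state `x` with
`∑ k conj (s k) q k x k ≠ 0`, the complex random walk `x(t+1) = (Q⁻¹W) x(t)` converges to a
steady state in which nodes of the same block have the same phase and nodes of different
blocks have distinct phases. -/
theorem stmt12 {n p : ℕ} (hp : 0 < p) (G : SimpleGraph (Fin n)) (hconn : G.Connected)
    (σ : Fin n → Fin p) (hσ : Function.Surjective σ) :
    ∃ (W : Matrix (Fin n) (Fin n) ℂ) (s : Fin n → ℂ),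
      W.IsHermitian ∧
      (∀ u v, u ≠ v → ¬ G.Adj u v → W u v = 0) ∧
      (∀ v, ‖s v‖ = 1) ∧
      (∀ u v, σ u = σ v ↔ s u = s v) ∧
      ∀ x : Fin n → ℂ,
        (∑ k, starRingEnd ℂ (s k) * ((∑ l, ‖W k l‖ : ℝ) : ℂ) * x k) ≠ 0 →
        ∃ xhat : Fin n → ℂ,
          Filter.Tendsto
            (fun t =>
              ((Matrix.of fun i j => W i j / ((∑ l, ‖W i l‖ : ℝ) : ℂ)) ^ t).mulVec x)
            Filter.atTop (nhds xhat) ∧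
          (∀ j, xhat j ≠ 0) ∧
          (∀ u v, σ u = σ v ↔
            xhat u / (‖xhat u‖ : ℂ) = xhat v / (‖xhat v‖ : ℂ)) :=
  stmt12_general G hconn σ
end

section
/- Let G be a finite graph with node features x_i ∈ ℂ^f such that the pairs (x_i, x_j) are distinct for distinct ordered edges (v_i, v_j) ∈ E. Then for any Hermitian complex weight matrix W supported on E, there exists a function Φ of the form Φ(x_i, x_j) = σ̃(V[x_i ‖ x_j]) for (i ≤ j), and the complex conjugate for i > j, realized by an MLP with sufficient capacity, such that Φ(x_i, x_j) = W_ij for all edges, up to arbitrarily small uniform error. -/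
/-!
Regard `(Fin f → ℂ) × (Fin f → ℂ)` as a real vector space. The feature pairs on the darts of `G`
are distinct points of it, so it suffices that a one-hidden-layer network interpolates arbitrary
complex values at finitely many distinct points; on the conjugated branch the value is then
`conj (W j i) = W i j` because `W` is Hermitian.

Interpolation holds because, for continuous non-polynomial `σ` and distinct points `p_i`, the
vectors `(σ (ℓ (p_i) + b))_i` span `ℝ^k`. A functional `ℓ` injective on the points reduces this to
distinct reals `t_i`. A vector `λ` orthogonal to every `(σ (a * t_i + b))_i` stays orthogonal for
each mollification `g` of `σ`, and differentiating `m` times in `a` at `0` gives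
`(∑ λ_i t_i ^ m) • g⁽ᵐ⁾ = 0`. If `λ ≠ 0` some moment with `m < k` is nonzero (Vandermonde), so every
mollification is a polynomial of degree `< k`, and then so is their pointwise limit `σ`.
-/

/-- A one-hidden-layer network (MLP) on a pair of complex feature vectors, interpreted as
real vectors via real and imaginary parts; the two real outputs are identified with a
complex number. -/
noncomputable def mlpNet {N f : ℕ} (σact : ℝ → ℝ) (A1 A2 A3 A4 : Fin N → Fin f → ℝ)
    (bb : Fin N → ℝ) (cc : Fin N → Fin 2 → ℝ) (a b : Fin f → ℂ) : ℂ :=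
  ((∑ t, cc t 0 * σact ((∑ s, (A1 t s * (a s).re + A2 t s * (a s).im +
      A3 t s * (b s).re + A4 t s * (b s).im)) + bb t) : ℝ) : ℂ) +
  ((∑ t, cc t 1 * σact ((∑ s, (A1 t s * (a s).re + A2 t s * (a s).im +
      A3 t s * (b s).re + A4 t s * (b s).im)) + bb t) : ℝ) : ℂ) * Complex.I

open Filter Topology Polynomial MeasureTheory Convolution

theorem exists_lt_card_sum_mul_pow_ne_zero {R κ : Type*} [CommRing R] [IsDomain R] [Fintype κ]
    {t : κ → R} (ht : Function.Injective t) {lam : κ → R} (hlam : lam ≠ 0) :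
    ∃ m < Fintype.card κ, ∑ i, lam i * t i ^ m ≠ 0 := by
  by_contra! hmoments
  let e := (Fintype.equivFin κ).symm
  have hzero : lam ∘ e = 0 :=
    Matrix.eq_zero_of_forall_pow_sum_mul_pow_eq_zero (f := t ∘ e) (ht.comp e.injective)
      fun j => by simpa [Function.comp, e.sum_comp fun i => lam i * t i ^ (j : ℕ)]
        using hmoments j j.isLt
  exact hlam (funext fun i => by simpa using congrFun hzero (e.symm i))

theorem exists_polynomial_of_iteratedDeriv_eq_zero {m : ℕ} {g : ℝ → ℝ} (hg : ContDiff ℝ m g)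
    (h : iteratedDeriv m g = 0) : ∃ p : ℝ[X], p.degree < m ∧ ∀ x, g x = p.eval x := by
  induction m generalizing g with
  | zero => exact ⟨0, by simp, fun x => by simpa using congrFun h x⟩
  | succ m ih =>
    obtain ⟨c, hc⟩ : ∃ c, ∀ x, iteratedDeriv m g x = c := by
      refine ⟨iteratedDeriv m g 0, fun x => is_const_of_deriv_eq_zero
        (hg.differentiable_iteratedDeriv m (by norm_cast; omega)) (fun y => ?_) x 0⟩
      simpa [iteratedDeriv_succ] using congrFun h y
    set a := c / m.factorial
    have hmonomial : ContDiff ℝ m fun x : ℝ => a * x ^ m := by fun_prop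
    obtain ⟨p, hp, hpg⟩ := ih (g := fun x => g x - a * x ^ m) (hg.of_succ.sub hmonomial) <| by
      ext x
      rw [iteratedDeriv_fun_sub hg.of_succ.contDiffAt hmonomial.contDiffAt,
        iteratedDeriv_const_mul_field, iteratedDeriv_pow]
      simp [hc, a, Nat.descFactorial_self, Nat.factorial_ne_zero]
    refine ⟨p + C a * X ^ m, ?_, fun x => by simp [← hpg]⟩
    have hm : (m : WithBot ℕ) < ↑(m + 1) := by exact_mod_cast Nat.lt_succ_self m
    exact (degree_add_le _ _).trans_lt
      (max_lt (hp.trans hm) ((degree_C_mul_X_pow_le _ _).trans_lt hm))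

theorem exists_polynomial_of_tendsto {ι : Type*} {l : Filter ι} [l.NeBot] {k : ℕ}
    {g : ι → ℝ → ℝ} {σ : ℝ → ℝ}
    (hg : ∀ q, ∃ p : ℝ[X], p.degree < k ∧ ∀ x, g q x = p.eval x)
    (hlim : ∀ x, Tendsto (g · x) l (𝓝 (σ x))) :
    ∃ p : ℝ[X], ∀ x, σ x = p.eval x := by
  have hinj : Set.InjOn (Nat.cast : ℕ → ℝ) (Finset.range k) := Nat.cast_injective.injOn
  have hinterp : ∀ q x, g q x = (Lagrange.interpolate (Finset.range k) Nat.cast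
      fun i => g q i).eval x := by
    intro q x
    obtain ⟨p, hp, hpg⟩ := hg q
    rw [hpg, Lagrange.eq_interpolate (f := p) hinj (by simpa using hp)]
    simp only [← hpg]
  refine ⟨Lagrange.interpolate (Finset.range k) Nat.cast fun i => σ i, fun x => ?_⟩
  refine tendsto_nhds_unique (hlim x) ?_
  simp only [hinterp _ x, Lagrange.interpolate_apply, eval_finsetSum, eval_mul, eval_C]
  exact tendsto_finsetSum _ fun i _ => (hlim i).mul_const _

theorem iteratedDeriv_sum_mul_comp_affine {κ : Type*} [Fintype κ] {m : ℕ} {g : ℝ → ℝ}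
    (hg : ContDiff ℝ m g) (t lam : κ → ℝ) (b : ℝ) :
    iteratedDeriv m (fun a => ∑ i, lam i * g (a * t i + b)) 0
      = (∑ i, lam i * t i ^ m) * iteratedDeriv m g b := by
  have hshift : ContDiff ℝ m fun y => g (y + b) := hg.comp (by fun_prop)
  have hterm : ∀ i, ContDiff ℝ m fun a => lam i * g (a * t i + b) := fun i => by fun_prop
  rw [iteratedDeriv_fun_sum fun i _ => (hterm i).contDiffAt, Finset.sum_mul]
  refine Finset.sum_congr rfl fun i _ => ?_
  simp_rw [iteratedDeriv_const_mul_field, mul_comm _ (t i)]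
  rw [iteratedDeriv_comp_const_mul hshift, iteratedDeriv_comp_add_const]
  simp only [mul_zero, zero_add]
  ring

theorem iteratedDeriv_eq_zero_of_forall_sum_eq_zero {κ : Type*} [Fintype κ] {m : ℕ}
    {g : ℝ → ℝ} (hg : ContDiff ℝ m g) {t lam : κ → ℝ} (hmoment : ∑ i, lam i * t i ^ m ≠ 0)
    (h : ∀ a b, ∑ i, lam i * g (a * t i + b) = 0) : iteratedDeriv m g = 0 := by
  ext b
  have hzero : iteratedDeriv m (fun a => ∑ i, lam i * g (a * t i + b)) 0 = 0 := by
    simp [h]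
  rw [iteratedDeriv_sum_mul_comp_affine hg] at hzero
  exact (mul_eq_zero.mp hzero).resolve_left hmoment

noncomputable def shrinkingBump (q : ℕ) : ContDiffBump (0 : ℝ) where
  rIn := (q + 2 : ℝ)⁻¹
  rOut := (q + 1 : ℝ)⁻¹
  rIn_pos := by positivity
  rIn_lt_rOut := inv_strictAnti₀ (by positivity) (by linarith)

theorem tendsto_shrinkingBump_rOut : Tendsto (fun q => (shrinkingBump q).rOut) atTop (𝓝 0) := by
  simpa [shrinkingBump] using tendsto_one_div_add_atTop_nhds_zero_nat (𝕜 := ℝ)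

theorem sum_mul_convolution_comp_affine_eq_zero {κ : Type*} [Fintype κ] {σ : ℝ → ℝ}
    (hσ : Continuous σ) {φ : ℝ → ℝ} (hφc : Continuous φ) (hφs : HasCompactSupport φ)
    {t lam : κ → ℝ} (h : ∀ a b, ∑ i, lam i * σ (a * t i + b) = 0) (a b : ℝ) :
    ∑ i, lam i * (φ ⋆[ContinuousLinearMap.lsmul ℝ ℝ, volume] σ) (a * t i + b) = 0 := by
  have hint : ∀ c, Integrable fun y => φ y * σ (c - y) := fun c =>
    (hφc.mul (hσ.comp (continuous_const.sub continuous_id))).integrable_of_hasCompactSupport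
      hφs.mul_right
  simp only [convolution_def, ContinuousLinearMap.lsmul_apply, smul_eq_mul]
  calc ∑ i, lam i * ∫ y, φ y * σ (a * t i + b - y)
      = ∫ y, ∑ i, lam i * (φ y * σ (a * t i + b - y)) := by
        simp only [← integral_const_mul]
        exact (integral_finsetSum _ fun i _ => (hint _).const_mul _).symm
    _ = ∫ y, φ y * ∑ i, lam i * σ (a * t i + (b - y)) := by
        simp only [Finset.mul_sum, add_sub_assoc, mul_left_comm]
    _ = 0 := by simp [h]

theorem eq_zero_of_forall_sum_mul_comp_affine_eq_zero {κ : Type*} [Fintype κ] {σ : ℝ → ℝ}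
    (hσc : Continuous σ) (hσp : ¬ ∃ p : ℝ[X], ∀ x, σ x = p.eval x) {t : κ → ℝ}
    (ht : Function.Injective t) {lam : κ → ℝ} (h : ∀ a b, ∑ i, lam i * σ (a * t i + b) = 0) :
    lam = 0 := by
  by_contra hlam
  obtain ⟨m, hm, hmoment⟩ := exists_lt_card_sum_mul_pow_ne_zero ht hlam
  let g q := (shrinkingBump q).normed volume ⋆[ContinuousLinearMap.lsmul ℝ ℝ, volume] σ
  have hg : ∀ q, ContDiff ℝ m (g q) := fun q =>
    (shrinkingBump q).hasCompactSupport_normed.contDiff_convolution_left _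
      (shrinkingBump q).contDiff_normed hσc.locallyIntegrable
  refine hσp (exists_polynomial_of_tendsto (k := Fintype.card κ) (g := g) (fun q => ?_)
    (ContDiffBump.convolution_tendsto_right_of_continuous (μ := volume)
      tendsto_shrinkingBump_rOut hσc))
  have hrel := sum_mul_convolution_comp_affine_eq_zero hσc
    ((shrinkingBump q).continuous_normed (μ := volume)) (shrinkingBump q).hasCompactSupport_normed h
  obtain ⟨p, hp, hpg⟩ := exists_polynomial_of_iteratedDeriv_eq_zero (hg q)
    (iteratedDeriv_eq_zero_of_forall_sum_eq_zero (hg q) hmoment hrel)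
  exact ⟨p, hp.trans_le (by exact_mod_cast hm.le), hpg⟩

theorem Module.Dual.exists_injective_comp {K E κ : Type*} [Field K] [Infinite K] [AddCommGroup E]
    [Module K E] [Finite κ] {p : κ → E} (hp : Function.Injective p) :
    ∃ ℓ : Module.Dual K E, Function.Injective (ℓ ∘ p) := by
  obtain ⟨ℓ, hℓ⟩ := Module.exists_dual_forall_apply_ne_zero (K := K)
    (fun ij : {ij : κ × κ // ij.1 ≠ ij.2} => p ij.1.1 - p ij.1.2)
    fun ij => sub_ne_zero.mpr (hp.ne ij.2)
  exact ⟨ℓ, fun i j hij => by_contra fun hne => hℓ ⟨(i, j), hne⟩ (by simpa [sub_eq_zero] using hij)⟩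

theorem span_range_activation_eq_top {E κ : Type*} [AddCommGroup E] [Module ℝ E] [Fintype κ]
    {σ : ℝ → ℝ} (hσc : Continuous σ) (hσp : ¬ ∃ p : ℝ[X], ∀ x, σ x = p.eval x) {p : κ → E}
    (hp : Function.Injective p) :
    Submodule.span ℝ (Set.range fun ℓb : Module.Dual ℝ E × ℝ => fun i => σ (ℓb.1 (p i) + ℓb.2))
      = ⊤ := by
  classical
  by_contra hne
  obtain ⟨φ, hφ0, hφ⟩ := Submodule.exists_dual_map_eq_bot_of_lt_top (lt_top_iff_ne_top.mpr hne)
    inferInstance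
  obtain ⟨ℓ, hℓ⟩ := Module.Dual.exists_injective_comp (K := ℝ) hp
  have hlam : ∀ i, φ (fun j => if i = j then 1 else 0) = 0 := by
    refine congrFun (eq_zero_of_forall_sum_mul_comp_affine_eq_zero hσc hσp hℓ fun a b => ?_)
    have hfeature : φ (fun i => σ ((a • ℓ) (p i) + b)) = 0 := by
      rw [← Submodule.mem_bot ℝ, ← hφ]
      exact Submodule.mem_map_of_mem (Submodule.subset_span ⟨(a • ℓ, b), rfl⟩)
    rw [LinearMap.pi_apply_eq_sum_univ] at hfeature
    simpa [mul_comm] using hfeature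
  exact hφ0 (LinearMap.ext fun v => by simp [LinearMap.pi_apply_eq_sum_univ φ v, hlam])

theorem exists_hidden_layer_interpolating {E κ : Type*} [AddCommGroup E] [Module ℝ E] [Fintype κ]
    {σ : ℝ → ℝ} (hσc : Continuous σ) (hσp : ¬ ∃ p : ℝ[X], ∀ x, σ x = p.eval x) {p : κ → E}
    (hp : Function.Injective p) :
    ∃ (N : ℕ) (ℓ : Fin N → Module.Dual ℝ E) (b : Fin N → ℝ),
      ∀ v : κ → ℝ, ∃ c : Fin N → ℝ, ∀ i, ∑ τ, c τ * σ (ℓ τ (p i) + b τ) = v i := by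
  obtain ⟨g, hgS, hgspan, -⟩ := Submodule.exists_fun_fin_finrank_span_eq ℝ
    (Set.range fun ℓb : Module.Dual ℝ E × ℝ => fun i => σ (ℓb.1 (p i) + ℓb.2))
  choose ℓb hℓb using hgS
  refine ⟨_, fun τ => (ℓb τ).1, fun τ => (ℓb τ).2, fun v => ?_⟩
  have hv : v ∈ Submodule.span ℝ (Set.range g) := by
    simp [hgspan, span_range_activation_eq_top hσc hσp hp]
  obtain ⟨c, hc⟩ := Submodule.mem_span_range_iff_exists_fun ℝ |>.mp hv
  exact ⟨c, fun i => by simp [← hc, ← hℓb]⟩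

theorem Module.Dual.apply_pi_complex {ι : Type*} [Fintype ι] [DecidableEq ι]
    (ℓ : Module.Dual ℝ (ι → ℂ)) (a : ι → ℂ) :
    ℓ a = ∑ s, (ℓ (Pi.single s 1) * (a s).re + ℓ (Pi.single s Complex.I) * (a s).im) := by
  conv_lhs => rw [← Finset.univ_sum_single a]
  refine (map_sum ℓ _ _).trans (Finset.sum_congr rfl fun s _ => ?_)
  have hsingle : Pi.single s (a s)
      = (a s).re • (Pi.single s 1 : ι → ℂ) + (a s).im • (Pi.single s Complex.I : ι → ℂ) := by
    rw [← Pi.single_smul', ← Pi.single_smul', ← Pi.single_add]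
    simp
  rw [hsingle, map_add, map_smul, map_smul, smul_eq_mul, smul_eq_mul, mul_comm, mul_comm (a s).im]

theorem Module.Dual.apply_prod_pi_complex {ι : Type*} [Fintype ι] [DecidableEq ι]
    (ℓ : Module.Dual ℝ ((ι → ℂ) × (ι → ℂ))) (a b : ι → ℂ) :
    ℓ (a, b) = ∑ s, (ℓ (Pi.single s 1, 0) * (a s).re + ℓ (Pi.single s Complex.I, 0) * (a s).im
      + ℓ (0, Pi.single s 1) * (b s).re + ℓ (0, Pi.single s Complex.I) * (b s).im) := by
  have hsplit : ℓ (a, b) = (ℓ ∘ₗ LinearMap.inl ℝ _ _) a + (ℓ ∘ₗ LinearMap.inr ℝ _ _) b := by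
    simp [← map_add]
  rw [hsplit, Module.Dual.apply_pi_complex, Module.Dual.apply_pi_complex, ← Finset.sum_add_distrib]
  simp only [LinearMap.comp_apply, LinearMap.inl_apply, LinearMap.inr_apply]
  ring_nf

theorem mlpNet_eq_sum_of_dual {N f : ℕ} (σ : ℝ → ℝ)
    (ℓ : Fin N → Module.Dual ℝ ((Fin f → ℂ) × (Fin f → ℂ))) (b c₀ c₁ : Fin N → ℝ)
    (x y : Fin f → ℂ) :
    mlpNet σ (fun τ s => ℓ τ (Pi.single s 1, 0)) (fun τ s => ℓ τ (Pi.single s Complex.I, 0))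
        (fun τ s => ℓ τ (0, Pi.single s 1)) (fun τ s => ℓ τ (0, Pi.single s Complex.I)) b
        (fun τ => ![c₀ τ, c₁ τ]) x y
      = (∑ τ, c₀ τ * σ (ℓ τ (x, y) + b τ) : ℝ)
        + (∑ τ, c₁ τ * σ (ℓ τ (x, y) + b τ) : ℝ) * Complex.I := by
  simp only [mlpNet, Matrix.cons_val_zero, Matrix.cons_val_one,
    ← Module.Dual.apply_prod_pi_complex]

theorem exists_mlpNet_eq {κ : Type*} [Fintype κ] {f : ℕ} {σ : ℝ → ℝ} (hσc : Continuous σ)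
    (hσp : ¬ ∃ p : ℝ[X], ∀ x, σ x = p.eval x) {z : κ → (Fin f → ℂ) × (Fin f → ℂ)}
    (hz : Function.Injective z) (v : κ → ℂ) :
    ∃ (N : ℕ) (A1 A2 A3 A4 : Fin N → Fin f → ℝ) (bb : Fin N → ℝ) (cc : Fin N → Fin 2 → ℝ),
      ∀ i, mlpNet σ A1 A2 A3 A4 bb cc (z i).1 (z i).2 = v i := by
  obtain ⟨N, ℓ, b, hinterp⟩ := exists_hidden_layer_interpolating hσc hσp hz
  obtain ⟨c₀, hc₀⟩ := hinterp fun i => (v i).re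
  obtain ⟨c₁, hc₁⟩ := hinterp fun i => (v i).im
  refine ⟨N, fun τ s => ℓ τ (Pi.single s 1, 0), fun τ s => ℓ τ (Pi.single s Complex.I, 0),
    fun τ s => ℓ τ (0, Pi.single s 1), fun τ s => ℓ τ (0, Pi.single s Complex.I), b,
    fun τ => ![c₀ τ, c₁ τ], fun i => ?_⟩
  rw [mlpNet_eq_sum_of_dual, hc₀, hc₁, Complex.re_add_im]

theorem stmt16_general {n f : ℕ} (G : SimpleGraph (Fin n)) (x : Fin n → (Fin f → ℂ))
    (hdist : ∀ i j i' j' : Fin n, G.Adj i j → G.Adj i' j' → (i, j) ≠ (i', j') →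
      (x i, x j) ≠ (x i', x j'))
    (W : Matrix (Fin n) (Fin n) ℂ) (hW : W.IsHermitian)
    (σact : ℝ → ℝ) (hσc : Continuous σact)
    (hσp : ¬ ∃ p : Polynomial ℝ, ∀ t, σact t = p.eval t)
    (ε : ℝ) (hε : 0 < ε) :
    ∃ (N : ℕ) (A1 A2 A3 A4 : Fin N → Fin f → ℝ) (bb : Fin N → ℝ) (cc : Fin N → Fin 2 → ℝ),
      ∀ i j, G.Adj i j →
        norm
          ((if (i : ℕ) ≤ (j : ℕ) then mlpNet σact A1 A2 A3 A4 bb cc (x i) (x j)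
            else starRingEnd ℂ (mlpNet σact A1 A2 A3 A4 bb cc (x j) (x i))) - W i j) < ε := by
  classical
  have hinj : Function.Injective fun e : G.Dart => (x e.fst, x e.snd) := fun e e' h =>
    SimpleGraph.Dart.toProd_injective (by_contra fun hne => hdist _ _ _ _ e.adj e'.adj hne h)
  obtain ⟨N, A1, A2, A3, A4, bb, cc, hnet⟩ :=
    exists_mlpNet_eq hσc hσp hinj fun e : G.Dart => W e.fst e.snd
  refine ⟨N, A1, A2, A3, A4, bb, cc, fun i j hij => ?_⟩
  split_ifs
  · simpa [hnet ⟨(i, j), hij⟩] using hε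
  · simpa [hnet ⟨(j, i), hij.symm⟩, ← hW.apply i j] using hε

/-- If the pairs of node features attached to distinct edges are distinct, then for any
Hermitian complex weight matrix supported on the edges there is a function
`Φ(x_i, x_j) = σ̃(V[x_i ‖ x_j])` for `i ≤ j` (and the complex conjugate for `i > j`),
realized by an MLP, with `Φ(x_i, x_j) = W i j` on all edges up to arbitrarily small
uniform error. -/
theorem stmt16 {n f : ℕ} (G : SimpleGraph (Fin n)) (x : Fin n → (Fin f → ℂ))
    (hdist : ∀ i j i' j' : Fin n, G.Adj i j → G.Adj i' j' → (i, j) ≠ (i', j') →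
      (x i, x j) ≠ (x i', x j'))
    (W : Matrix (Fin n) (Fin n) ℂ) (hW : W.IsHermitian)
    (hsupp : ∀ i j, ¬ G.Adj i j → W i j = 0)
    (σact : ℝ → ℝ) (hσc : Continuous σact)
    (hσp : ¬ ∃ p : Polynomial ℝ, ∀ t, σact t = p.eval t)
    (ε : ℝ) (hε : 0 < ε) :
    ∃ (N : ℕ) (A1 A2 A3 A4 : Fin N → Fin f → ℝ) (bb : Fin N → ℝ) (cc : Fin N → Fin 2 → ℝ),
      ∀ i j, G.Adj i j →
        norm
          ((if (i : ℕ) ≤ (j : ℕ) then mlpNet σact A1 A2 A3 A4 bb cc (x i) (x j)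
            else starRingEnd ℂ (mlpNet σact A1 A2 A3 A4 bb cc (x j) (x i))) - W i j) < ε :=
  stmt16_general G x hdist W hW σact hσc hσp ε hε
end
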